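/- arXiv:1910.13373 — 2 statements merged into one kernel-verified Lean document; each statement's English description precedes it below -/
import Mathlib

section
/- Correctness of the hierarchical scan: let (M, *, 1) be a monoid (the operation need not be commutative), x : ℕ → M a sequence of inputs, and n ≥ 1 a natural number. Then for all natural numbers j and all i < n, the ordered product x₀ * x₁ * ⋯ * x_{j·n+i} equals (∏_{j'=0}^{j−1} (x_{j'·n} * x_{j'·n+1} * ⋯ * x_{j'·n+n−1})) * (x_{j·n} * x_{j·n+1} * ⋯ * x_{j·n+i}), where all products are taken in increasing index order; i.e., the inclusive prefix over all processes up to process i on node j equals the exclusive scan over nodes of the node-local totals, multiplied by the node-local inclusive prefix. -/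
lemma prod_range_split {M : Type*} [Monoid M] (x : ℕ → M) (a b : ℕ) :
    ((List.range (a + b)).map x).prod
      = ((List.range a).map x).prod * ((List.range b).map (fun k => x (a + k))).prod := by
  rw [List.range_add, List.map_append, List.prod_append, List.map_map]
  rfl

/-- Correctness of the hierarchical scan: for a monoid `M` (not necessarily commutative),
inputs `x : ℕ → M`, and `n ≥ 1` processes per node, the inclusive prefix product over all
processes up to process `i < n` on node `j` (global rank `j·n + i`) equals the exclusive
scan over nodes of the node-local totals, multiplied by the node-local inclusive prefix. -/
theorem hierarchical_scan_correct {M : Type*} [Monoid M] (x : ℕ → M) (n : ℕ) (hn : 1 ≤ n)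
    (j i : ℕ) (hi : i < n) :
    ((List.range (j * n + i + 1)).map x).prod
      = ((List.range j).map (fun j' => ((List.range n).map (fun i' => x (j' * n + i'))).prod)).prod
        * ((List.range (i + 1)).map (fun i' => x (j * n + i'))).prod := by
  induction j generalizing i with
  | zero => simp
  | succ j ih =>
    rw [(by ring : (j+1) * n + i + 1 = j * n + n + (i + 1)),
      prod_range_split x (j * n + n) (i + 1),
      (by omega : j * n + n = j * n + (n - 1) + 1), ih (n - 1) (by omega),
      (by omega : n - 1 + 1 = n)]
    have h1 : ∀ k, j * n + (n - 1) + 1 + k = (j + 1) * n + k := fun k => by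
      rw [add_mul, one_mul]; omega
    simp only [h1, List.range_succ, List.map_append, List.prod_append, List.map_cons,
      List.map_nil, List.prod_cons, List.prod_nil, mul_one, mul_assoc]
end

section
/- Quantitative form of the k-lane pipeline construction for the linear pipeline: fix natural numbers C ≥ 1 and k ≥ 1, and let T(q, d) = (q−1)·C + (d/C − 1)·C denote the running time of the single-ported linear-pipeline broadcast on q processors with d data elements and pipeline block size C. Then for all naturals p and c with k ∣ p, (k·C) ∣ c, p/k ≥ 1 and c/(k·C) ≥ 1, the k-lane transformed pipeline, which has pipeline delay p/k − 1 + 3 and processes c/(k·C) blocks, runs in (p/k + 2)·C + (c/(k·C) − 1)·C = T(p/k, c/k) + 3·C time units; i.e., it matches T(p/k, c/k) up to the additive constant 3·C (three extra steps: the special first step at the root replicas, the delay at the leaves for their first exchange, and the extra step back to the root). -/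
/-- Running time `T q d = (q−1)·C + (d/C − 1)·C` of the single-ported linear-pipeline
broadcast on `q` processors with `d` data elements and pipeline block size `C`. -/
def pipelineTime (C q d : ℕ) : ℕ := (q - 1) * C + (d / C - 1) * C

/-- Quantitative form of the `k`-lane pipeline construction for the linear pipeline:
for `C ≥ 1`, `k ≥ 1`, and all `p`, `c` with `k ∣ p`, `(k·C) ∣ c`, `p/k ≥ 1` and
`c/(k·C) ≥ 1`, the `k`-lane transformed pipeline, with pipeline delay `p/k − 1 + 3` and
`c/(k·C)` blocks, runs in `(p/k + 2)*C + (c/(k·C) − 1)·C = T(p/k, c/k) + 3·C` time units,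
i.e. it matches `T(p/k, c/k)` up to the additive constant `3·C`. -/
theorem kLane_pipeline_time (C k : ℕ) (hC : 1 ≤ C) (hk : 1 ≤ k)
    (p c : ℕ) (hp : k ∣ p) (hc : (k * C) ∣ c) (hpk : 1 ≤ p / k) (hck : 1 ≤ c / (k * C)) :
    (p / k + 2) * C + (c / (k * C) - 1) * C = pipelineTime C (p / k) (c / k) + 3 * C := by
  have h : c / k / C = c / (k * C) := Nat.div_div_eq_div_mul c k C
  unfold pipelineTime
  rw [h]
  have h1 : (p / k + 2) * C = (p / k - 1) * C + 3 * C := by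
    have := Nat.sub_add_cancel hpk
    nlinarith [Nat.sub_add_cancel hpk]
  omega
end
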